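/- arXiv:0910.2722 — 2 statements merged into one kernel-verified Lean document; each statement's English description precedes it below -/
import Mathlib

section
/- Let 0<p<q, p+q+r=1, r>0, and let ρ_2(λ) = (λ−r−√((λ−r)²−4pq))/(2p) for real λ. If λ ∈ (r+2√(pq), 1], then |ρ_2(λ)| < √(q/p); and if λ ∈ [−1, r−2√(pq)), then |ρ_2(λ)| > √(q/p). -/
/-!
Put `s = λ - r` and `a = √(pq)`, so that `√(q/p) = a/p` and `2p·ρ₂ = s - √(s² - 4a²)`;
the claims become `|s - √(s² - 4a²)| < 2a` for `s > 2a` and `> 2a` for `s < -2a`.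
For `s > 2a` the square root lies in `(s - 2a, s]`, because `s² - 4a² - (s - 2a)² = 4a(s - 2a) > 0`.
For `s < -2a` already `-s > 2a`, and the square root only adds to it.
-/

open Real

lemma Real.sqrt_div_eq_sqrt_mul_div (q : ℝ) {p : ℝ} (hp : 0 < p) : √(q / p) = √(p * q) / p := by
  rw [show q / p = p * q / p ^ 2 by field_simp, sqrt_div' _ (sq_nonneg p), sqrt_sq hp.le]

lemma abs_sub_sqrt_sq_sub_four_mul_sq_lt {a s : ℝ} (ha : 0 < a) (hs : 2 * a < s) :
    |s - √(s ^ 2 - 4 * a ^ 2)| < 2 * a := by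
  have hsqrt_le : √(s ^ 2 - 4 * a ^ 2) ≤ s :=
    sqrt_le_iff.mpr ⟨by linarith, by nlinarith⟩
  have hsqrt_gt : s - 2 * a < √(s ^ 2 - 4 * a ^ 2) :=
    (lt_sqrt (by linarith)).mpr (by nlinarith)
  rw [abs_of_nonneg (by linarith)]
  linarith

lemma lt_abs_sub_sqrt_sq_sub_four_mul_sq {a s : ℝ} (ha : 0 ≤ a) (hs : s < -(2 * a)) :
    2 * a < |s - √(s ^ 2 - 4 * a ^ 2)| := by
  have := sqrt_nonneg (s ^ 2 - 4 * a ^ 2)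
  rw [abs_of_neg (by linarith)]
  linarith

theorem stmt_6_general (p r q : ℝ) (hp : 0 < p) (hpq : p < q) (lam : ℝ) :
    (lam ∈ Set.Ioc (r + 2 * Real.sqrt (p * q)) 1 →
      |(lam - r - Real.sqrt ((lam - r) ^ 2 - 4 * p * q)) / (2 * p)|
        < Real.sqrt (q / p)) ∧
    (lam ∈ Set.Ico (-1 : ℝ) (r - 2 * Real.sqrt (p * q)) →
      |(lam - r - Real.sqrt ((lam - r) ^ 2 - 4 * p * q)) / (2 * p)|
        > Real.sqrt (q / p)) := by
  have hpq0 : 0 < p * q := mul_pos hp (hp.trans hpq)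
  set a := √(p * q)
  have ha : 0 < a := sqrt_pos.mpr hpq0
  have hdisc : 4 * p * q = 4 * a ^ 2 := by rw [sq_sqrt hpq0.le]; ring
  have hc : √(q / p) = 2 * a / (2 * p) := by
    rw [sqrt_div_eq_sqrt_mul_div q hp, mul_div_mul_left _ _ two_ne_zero]
  have h2p : 0 < 2 * p := by positivity
  rw [hdisc, hc, abs_div, abs_of_pos h2p, gt_iff_lt, div_lt_div_iff_of_pos_right h2p,
    div_lt_div_iff_of_pos_right h2p]
  refine ⟨fun ⟨hlam, _⟩ ↦ abs_sub_sqrt_sq_sub_four_mul_sq_lt ha (by linarith),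
    fun ⟨_, hlam⟩ ↦ lt_abs_sub_sqrt_sq_sub_four_mul_sq ha.le (by linarith)⟩

theorem stmt_6 (p r q : ℝ) (hp : 0 < p) (hpq : p < q) (hr : 0 < r)
    (hsum : p + q + r = 1) (lam : ℝ) :
    (lam ∈ Set.Ioc (r + 2 * Real.sqrt (p * q)) 1 →
      |(lam - r - Real.sqrt ((lam - r) ^ 2 - 4 * p * q)) / (2 * p)|
        < Real.sqrt (q / p)) ∧
    (lam ∈ Set.Ico (-1 : ℝ) (r - 2 * Real.sqrt (p * q)) →
      |(lam - r - Real.sqrt ((lam - r) ^ 2 - 4 * p * q)) / (2 * p)|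
        > Real.sqrt (q / p)) :=
  stmt_6_general p r q hp hpq lam
end

section
/- Let 0<p<q, p+q+r=1, r>0. Define φ(x) = √(4pq−(x−r)²) / (2π·((r+q)x+q)·(1−x)) for x ∈ (r−2√(pq), r+2√(pq)) and φ(x)=0 otherwise. Then ∫_{r−2√(pq)}^{r+2√(pq)} φ(x) dx = p/(q+r). -/
/-!
Shifting by `r`, the density becomes `√(a² - t²) / (2π (q + r) (t + c) (d - t))` with
`a = 2√(pq)`, `c = r + q / (q + r)` and `d = 1 - r`; the hypotheses put both poles outside
`[-a, a]`. Partial fractions reduce the integral to `∫_{-a}^{a} √(a² - t²) / (b ∓ t) dt`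
for `b > a`, which equals `π (b - √(b² - a²))` by an explicit arcsine antiderivative.
Both discriminants `c² - a²` and `d² - a²` are perfect squares, so the total mass is
rational in `p, q, r`.
-/

open Real Set intervalIntegral

noncomputable def semicirclePrimitive (a b t : ℝ) : ℝ :=
  -√(a ^ 2 - t ^ 2) + b * arcsin (t / a) +
    √(b ^ 2 - a ^ 2) * arcsin ((a ^ 2 - b * t) / (a * (b - t)))

section SemicircleIntegral

variable {a b t : ℝ}

theorem sqrt_one_sub_div_sq (ha : 0 < a) :
    √(1 - (t / a) ^ 2) = √(a ^ 2 - t ^ 2) / a := by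
  rw [show 1 - (t / a) ^ 2 = (a ^ 2 - t ^ 2) / a ^ 2 by field_simp,
    sqrt_div' _ (by positivity), sqrt_sq ha.le]

theorem sqrt_one_sub_sq_div_mul_sub (ha : 0 < a) (hab : a < b) (ht : t < b) :
    √(1 - ((a ^ 2 - b * t) / (a * (b - t))) ^ 2) =
      √(b ^ 2 - a ^ 2) * √(a ^ 2 - t ^ 2) / (a * (b - t)) := by
  have hbt : 0 < b - t := sub_pos.2 ht
  rw [show 1 - ((a ^ 2 - b * t) / (a * (b - t))) ^ 2 =
      (b ^ 2 - a ^ 2) * (a ^ 2 - t ^ 2) / (a * (b - t)) ^ 2 by field_simp; ring,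
    sqrt_div' _ (by positivity), sqrt_sq (by positivity),
    sqrt_mul (by nlinarith)]

theorem hasDerivAt_semicirclePrimitive (ha : 0 < a) (hab : a < b) (ht : t ∈ Ioo (-a) a) :
    HasDerivAt (semicirclePrimitive a b) (√(a ^ 2 - t ^ 2) / (b - t)) t := by
  obtain ⟨hat, hta⟩ := ht
  have hs : 0 < a ^ 2 - t ^ 2 := by nlinarith
  have hbt : 0 < b - t := by linarith
  have hden : a * (b - t) ≠ 0 := by positivity
  have hlt_one : (a ^ 2 - b * t) / (a * (b - t)) < 1 := by
    rw [div_lt_one (by positivity)]; nlinarith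
  have hneg_one_lt : -1 < (a ^ 2 - b * t) / (a * (b - t)) := by
    rw [lt_div_iff₀ (by positivity)]; nlinarith
  have hA := (((hasDerivAt_id t).pow 2).const_sub (a ^ 2)).sqrt hs.ne'
  have hB := (hasDerivAt_arcsin (x := t / a) (by rw [ne_eq, div_eq_iff ha.ne']; linarith)
    (by rw [ne_eq, div_eq_iff ha.ne']; linarith)).comp t ((hasDerivAt_id t).div_const a)
  have hC := (hasDerivAt_arcsin hneg_one_lt.ne' hlt_one.ne).comp t
    ((((hasDerivAt_id t).const_mul b).const_sub (a ^ 2)).div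
      (((hasDerivAt_id t).const_sub b).const_mul a) hden)
  refine HasDerivAt.congr_deriv (f := semicirclePrimitive a b)
    ((hA.neg.add (hB.const_mul b)).add (hC.const_mul √(b ^ 2 - a ^ 2))) ?_
  simp only [id, Pi.pow_apply, Nat.cast_ofNat]
  rw [sqrt_one_sub_div_sq ha, sqrt_one_sub_sq_div_mul_sub ha hab (by linarith)]
  have hs' : 0 < √(a ^ 2 - t ^ 2) := sqrt_pos.2 hs
  have hba : 0 < √(b ^ 2 - a ^ 2) := sqrt_pos.2 (by nlinarith)
  field_simp
  linear_combination -sq_sqrt hs.le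

theorem continuousOn_semicirclePrimitive (ha : 0 < a) (hab : a < b) :
    ContinuousOn (semicirclePrimitive a b) (Icc (-a) a) := by
  have hden : ∀ t ∈ Icc (-a) a, a * (b - t) ≠ 0 := fun t ht => by
    have : 0 < b - t := by linarith [ht.2]
    positivity
  unfold semicirclePrimitive
  fun_prop (disch := first | exact ha.ne' | exact hden)

theorem semicirclePrimitive_self (ha : 0 < a) (hab : a < b) :
    semicirclePrimitive a b a = π / 2 * (b - √(b ^ 2 - a ^ 2)) := by
  have : (a ^ 2 - b * a) / (a * (b - a)) = -1 := by
    rw [div_eq_iff (by nlinarith)]; ring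
  simp only [semicirclePrimitive, this, sub_self, sqrt_zero, div_self ha.ne', arcsin_one,
    arcsin_neg_one]
  ring

theorem semicirclePrimitive_neg_self (ha : 0 < a) (hab : a < b) :
    semicirclePrimitive a b (-a) = -(π / 2 * (b - √(b ^ 2 - a ^ 2))) := by
  have : (a ^ 2 - b * -a) / (a * (b - -a)) = 1 := by
    rw [div_eq_iff (by nlinarith)]; ring
  simp only [semicirclePrimitive, this, neg_sq, sub_self, sqrt_zero, neg_div, div_self ha.ne',
    arcsin_one, arcsin_neg]
  ring

theorem intervalIntegrable_sqrt_sq_sub_sq_div {g : ℝ → ℝ} (hg : ContinuousOn g (uIcc (-a) a))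
    (hg0 : ∀ t ∈ uIcc (-a) a, g t ≠ 0) :
    IntervalIntegrable (fun t => √(a ^ 2 - t ^ 2) / g t) MeasureTheory.volume (-a) a :=
  ContinuousOn.intervalIntegrable (by fun_prop (disch := exact hg0))

theorem integral_sqrt_sq_sub_sq_div_sub (ha : 0 < a) (hab : a < b) :
    ∫ t in (-a)..a, √(a ^ 2 - t ^ 2) / (b - t) = π * (b - √(b ^ 2 - a ^ 2)) := by
  have hint :
      IntervalIntegrable (fun t => √(a ^ 2 - t ^ 2) / (b - t)) MeasureTheory.volume (-a) a :=
    intervalIntegrable_sqrt_sq_sub_sq_div (by fun_prop) fun t ht => by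
      rw [uIcc_of_le (by linarith)] at ht
      linarith [ht.2]
  rw [integral_eq_sub_of_hasDeriv_right_of_le (by linarith)
      (continuousOn_semicirclePrimitive ha hab)
      (fun t ht => (hasDerivAt_semicirclePrimitive ha hab ht).hasDerivWithinAt) hint,
    semicirclePrimitive_self ha hab, semicirclePrimitive_neg_self ha hab]
  ring

theorem integral_sqrt_sq_sub_sq_div_add (ha : 0 < a) (hab : a < b) :
    ∫ t in (-a)..a, √(a ^ 2 - t ^ 2) / (t + b) = π * (b - √(b ^ 2 - a ^ 2)) := by
  have := integral_comp_neg (a := -a) (b := a) fun t => √(a ^ 2 - t ^ 2) / (b - t)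
  simp only [neg_sq, sub_neg_eq_add, neg_neg, add_comm b] at this
  rw [this, integral_sqrt_sq_sub_sq_div_sub ha hab]

theorem integral_sqrt_sq_sub_sq_div_mul {c d : ℝ} (ha : 0 < a) (hac : a < c) (had : a < d) :
    ∫ t in (-a)..a, √(a ^ 2 - t ^ 2) / ((t + c) * (d - t)) =
      π * (c + d - √(c ^ 2 - a ^ 2) - √(d ^ 2 - a ^ 2)) / (c + d) := by
  have hpos : ∀ t ∈ uIcc (-a) a, 0 < t + c ∧ 0 < d - t := fun t ht => by
    rw [uIcc_of_le (by linarith)] at ht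
    constructor <;> linarith [ht.1, ht.2]
  have hpartial : EqOn (fun t => √(a ^ 2 - t ^ 2) / ((t + c) * (d - t)))
      (fun t => (c + d)⁻¹ * (√(a ^ 2 - t ^ 2) / (t + c)) +
        (c + d)⁻¹ * (√(a ^ 2 - t ^ 2) / (d - t))) (uIcc (-a) a) := fun t ht => by
    obtain ⟨hc, hd⟩ := hpos t ht
    have : 0 < c + d := by linarith
    field_simp
    ring
  have hint_c := intervalIntegrable_sqrt_sq_sub_sq_div (by fun_prop) fun t ht => (hpos t ht).1.ne'
  have hint_d := intervalIntegrable_sqrt_sq_sub_sq_div (by fun_prop) fun t ht => (hpos t ht).2.ne'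
  rw [integral_congr hpartial, integral_add (hint_c.const_mul _) (hint_d.const_mul _),
    integral_const_mul, integral_const_mul, integral_sqrt_sq_sub_sq_div_add ha hac,
    integral_sqrt_sq_sub_sq_div_sub ha had]
  ring

end SemicircleIntegral

section Parameters

variable {p q r : ℝ}

theorem sq_two_sqrt_mul (hp : 0 ≤ p) (hq : 0 ≤ q) : (2 * √(p * q)) ^ 2 = 4 * p * q := by
  rw [mul_pow, sq_sqrt (mul_nonneg hp hq)]; ring

theorem sq_add_div_sub_sq_two_sqrt_mul (hp : 0 ≤ p) (hq : 0 ≤ q) (hqr : q + r ≠ 0)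
    (hsum : p + q + r = 1) :
    (r + q / (q + r)) ^ 2 - (2 * √(p * q)) ^ 2 = (((q + r) ^ 2 - p * q) / (q + r)) ^ 2 := by
  rw [sq_two_sqrt_mul hp hq]
  field_simp
  linear_combination (-(q * (p * q + q ^ 2 + 3 * q * r + 2 * r ^ 2 + q))) * hsum

theorem sq_one_sub_sub_sq_two_sqrt_mul (hp : 0 ≤ p) (hq : 0 ≤ q) (hsum : p + q + r = 1) :
    (1 - r) ^ 2 - (2 * √(p * q)) ^ 2 = (q - p) ^ 2 := by
  rw [sq_two_sqrt_mul hp hq]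
  linear_combination (-(1 - r + p + q)) * hsum

end Parameters

theorem stmt_8 (p r q : ℝ) (hp : 0 < p) (hpq : p < q) (hr : 0 < r)
    (hsum : p + q + r = 1) :
    ∫ x in (r - 2 * Real.sqrt (p * q))..(r + 2 * Real.sqrt (p * q)),
      Real.sqrt (4 * p * q - (x - r) ^ 2) /
        (2 * Real.pi * ((r + q) * x + q) * (1 - x))
      = p / (q + r) := by
  have hq : 0 < q := hp.trans hpq
  have hqr : 0 < q + r := by linarith
  have hc_sq := sq_add_div_sub_sq_two_sqrt_mul hp.le hq.le hqr.ne' hsum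
  have hd_sq := sq_one_sub_sub_sq_two_sqrt_mul hp.le hq.le hsum
  have ha_sq := sq_two_sqrt_mul hp.le hq.le
  set a := 2 * √(p * q)
  set c := r + q / (q + r) with hc_def
  have ha : 0 < a := mul_pos two_pos (sqrt_pos.2 (mul_pos hp hq))
  have hc_root : 0 < ((q + r) ^ 2 - p * q) / (q + r) := div_pos (by nlinarith) hqr
  have hac : a < c := lt_of_pow_lt_pow_left₀ 2 (by positivity) (by nlinarith)
  have had : a < 1 - r := lt_of_pow_lt_pow_left₀ 2 (by linarith) (by nlinarith)
  have hintegrand : (fun x => √(4 * p * q - (x - r) ^ 2) /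
      (2 * π * ((r + q) * x + q) * (1 - x))) = fun x => (2 * π * (q + r))⁻¹ *
        (√(a ^ 2 - (x - r) ^ 2) / ((x - r + c) * (1 - r - (x - r)))) := by
    ext x
    rw [ha_sq, show (r + q) * x + q = (q + r) * (x - r + c) by rw [hc_def]; field_simp; ring]
    simp only [div_eq_mul_inv, mul_inv]
    ring
  rw [hintegrand, integral_const_mul,
    integral_comp_sub_right fun t => √(a ^ 2 - t ^ 2) / ((t + c) * (1 - r - t)),
    sub_sub_cancel_left, add_sub_cancel_left, integral_sqrt_sq_sub_sq_div_mul ha hac had,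
    hc_sq, hd_sq, sqrt_sq hc_root.le, sqrt_sq (by linarith),
    show c + (1 - r) = (2 * q + r) / (q + r) by rw [hc_def]; field_simp; ring]
  field_simp
  linear_combination (-(2 * q + r)) * hsum
end
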